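/- arXiv:1003.3177 — 6 statements merged into one kernel-verified Lean document; each statement's English description precedes it below -/
import Mathlib

section
/- Let n : ℕ, φ : Fin n → ℝ, and g ∈ GL_n(ℂ). Then the matrix-valued function (0,∞) → Mat_n(ℂ) sending t to the matrix with (i,j) entry t^(φ i − φ j) · g i j (i.e. to D(t) ⬝ g ⬝ D(t)⁻¹ where D(t) is the diagonal matrix with entries t^(φ i)) converges to a limit as t → 0⁺ if and only if g i j = 0 for all indices i, j with φ i < φ j. -/
/-!
Conjugation by `D(t)` scales the `(i,j)` entry by `t ^ (φ i - φ j)`. As `t → 0⁺` this factor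
tends to `0`, stays `1`, or blows up according as `φ i - φ j` is positive, zero or negative,
so the limit exists exactly when the entries with `φ i < φ j` vanish.
-/

open Filter Topology

theorem exists_tendsto_pi_iff {α ι : Type*} {π : ι → Type*} [∀ i, TopologicalSpace (π i)]
    {l : Filter α} (f : α → ∀ i, π i) :
    (∃ L, Tendsto f l (𝓝 L)) ↔ ∀ i, ∃ L, Tendsto (fun a => f a i) l (𝓝 L) := by
  constructor
  · rintro ⟨L, hL⟩ i
    exact ⟨L i, tendsto_pi_nhds.1 hL i⟩
  · intro h
    choose L hL using h
    exact ⟨L, tendsto_pi_nhds.2 hL⟩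

theorem tendsto_norm_rpow_mul_nhdsGT_zero_atTop {a : ℝ} (ha : a < 0) {c : ℂ} (hc : c ≠ 0) :
    Tendsto (fun t : ℝ => ‖((t ^ a : ℝ) : ℂ) * c‖) (𝓝[>] 0) atTop := by
  refine ((tendsto_rpow_neg_nhdsGT_zero ha).atTop_mul_const (norm_pos_iff.2 hc)).congr' ?_
  filter_upwards [self_mem_nhdsWithin] with t ht
  rw [norm_mul, Complex.norm_real, Real.norm_of_nonneg (Real.rpow_nonneg ht.le a)]

theorem exists_tendsto_rpow_mul_nhdsGT_zero_iff (a : ℝ) (c : ℂ) :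
    (∃ L, Tendsto (fun t : ℝ => ((t ^ a : ℝ) : ℂ) * c) (𝓝[>] 0) (𝓝 L)) ↔ (a < 0 → c = 0) := by
  constructor
  · rintro ⟨L, hL⟩ ha
    by_contra hc
    exact not_tendsto_nhds_of_tendsto_atTop
      (tendsto_norm_rpow_mul_nhdsGT_zero_atTop ha hc) _ hL.norm
  · intro h
    rcases lt_trichotomy a 0 with ha | rfl | ha
    · exact ⟨0, by simp [h ha]⟩
    · exact ⟨c, by simp⟩
    · have hpow : Tendsto (fun t : ℝ => t ^ a) (𝓝[>] 0) (𝓝 0) :=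
        (tendsto_id.mono_left nhdsWithin_le_nhds).rpow_const_nhds_zero ha
      exact ⟨0, by simpa using (Complex.continuous_ofReal.tendsto 0).comp hpow |>.mul_const c⟩

/-- For `g ∈ GL_n(ℂ)`, the function `t ↦ D(t) ⬝ g ⬝ D(t)⁻¹` on `(0,∞)`,
whose `(i,j)` entry is `t ^ (φ i - φ j) * g i j`, has a limit as `t → 0⁺` if and only if
`g i j = 0` whenever `φ i < φ j`. -/
theorem limit_exists_iff_parabolic (n : ℕ) (φ : Fin n → ℝ)
    (g : (Matrix (Fin n) (Fin n) ℂ)ˣ) :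
    (∃ L : Matrix (Fin n) (Fin n) ℂ,
      Tendsto (fun t : ℝ => Matrix.of fun i j => ((t ^ (φ i - φ j) : ℝ) : ℂ) * g.val i j)
        (nhdsWithin 0 (Set.Ioi 0)) (nhds L)) ↔
    ∀ i j, φ i < φ j → g.val i j = 0 := by
  refine (exists_tendsto_pi_iff _).trans <| forall_congr' fun i =>
    (exists_tendsto_pi_iff _).trans <| forall_congr' fun j => ?_
  simpa only [Matrix.of_apply, sub_neg] using exists_tendsto_rpow_mul_nhdsGT_zero_iff (φ i - φ j) _
end

section
/- Let n : ℕ, φ : Fin n → ℝ, h ∈ GL_n(ℂ), and set S = h ⬝ diag(φ) ⬝ h⁻¹. Then the set of g ∈ GL_n(ℂ) such that the function t ↦ exp((log t)·S) ⬝ g ⬝ exp(−(log t)·S) (for t ∈ (0,∞)) converges to a limit as t → 0⁺ is exactly h P_φ h⁻¹ = { h p h⁻¹ : p ∈ P_φ }. -/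
/-!
Conjugating by `h` reduces the problem to a diagonal `S = diag φ`. Then `t ^ S * g * t ^ (-S)`
multiplies the entry `g i j` by `t ^ (φ i - φ j)`, which has a limit as `t → 0⁺` exactly when
`φ i ≥ φ j` or `g i j = 0`.
-/

open Filter Topology

/-- The parabolic subgroup `P_φ ⊆ GL_n(ℂ)` attached to `φ : Fin n → ℝ`. -/
def parabolicSet (n : ℕ) (φ : Fin n → ℝ) : Set ((Matrix (Fin n) (Fin n) ℂ)ˣ) :=
  {g | ∀ i j, φ i < φ j → g.val i j = 0}

open Matrix

theorem Matrix.exp_smul_diagonal {m 𝔸 : Type*} [Fintype m] [DecidableEq m] [NormedCommRing 𝔸]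
    [NormedAlgebra ℚ 𝔸] [CompleteSpace 𝔸] (c : 𝔸) (d : m → 𝔸) :
    NormedSpace.exp (c • diagonal d) = diagonal fun i => NormedSpace.exp (c * d i) := by
  rw [← diagonal_smul, exp_diagonal]
  simp

theorem Matrix.exists_tendsto_iff {α m n R : Type*} [TopologicalSpace R] {l : Filter α}
    {f : α → Matrix m n R} :
    (∃ L, Tendsto f l (𝓝 L)) ↔ ∀ i j, ∃ c, Tendsto (fun x => f x i j) l (𝓝 c) := by
  constructor
  · rintro ⟨L, hL⟩ i j
    exact ⟨L i j, tendsto_pi_nhds.1 (tendsto_pi_nhds.1 hL i) j⟩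
  · intro hf
    choose c hc using hf
    exact ⟨of c, tendsto_pi_nhds.2 fun i => tendsto_pi_nhds.2 (hc i)⟩

theorem Units.exists_tendsto_conj_iff {α M : Type*} [Monoid M] [TopologicalSpace M]
    [ContinuousMul M] {l : Filter α} (u : Mˣ) (f : α → M) :
    (∃ L, Tendsto (fun x => u.val * f x * u⁻¹.val) l (𝓝 L)) ↔ ∃ L, Tendsto f l (𝓝 L) := by
  constructor
  · rintro ⟨L, hL⟩
    refine ⟨u⁻¹.val * L * u.val, ?_⟩
    simpa [mul_assoc] using (hL.const_mul u⁻¹.val).mul_const u.val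
  · rintro ⟨L, hL⟩
    exact ⟨_, (hL.const_mul _).mul_const _⟩

theorem Real.tendsto_exp_log_mul_nhdsGT_zero_atTop {a : ℝ} (ha : a < 0) :
    Tendsto (fun t => exp (log t * a)) (𝓝[>] 0) atTop :=
  tendsto_exp_atTop.comp (tendsto_log_nhdsGT_zero.atBot_mul_const_of_neg ha)

theorem Real.tendsto_exp_log_mul_nhdsGT_zero {a : ℝ} (ha : 0 < a) :
    Tendsto (fun t => exp (log t * a)) (𝓝[>] 0) (𝓝 0) :=
  tendsto_exp_atBot.comp (tendsto_log_nhdsGT_zero.atBot_mul_const ha)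

theorem Real.exists_tendsto_exp_log_mul_smul_iff {E : Type*} [NormedAddCommGroup E]
    [NormedSpace ℝ E] (a : ℝ) (z : E) :
    (∃ l, Tendsto (fun t => exp (log t * a) • z) (𝓝[>] 0) (𝓝 l)) ↔ (a < 0 → z = 0) := by
  constructor
  · rintro ⟨l, hl⟩ ha
    by_contra hz
    have hnorm : Tendsto (fun t => exp (log t * a) * ‖z‖) (𝓝[>] 0) atTop :=
      (tendsto_exp_log_mul_nhdsGT_zero_atTop ha).atTop_mul_const (norm_pos_iff.2 hz)
    refine not_tendsto_atTop_of_tendsto_nhds hl.norm (hnorm.congr fun t => ?_)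
    rw [norm_smul, norm_of_nonneg (exp_pos _).le]
  · intro hz
    rcases lt_trichotomy a 0 with ha | rfl | ha
    · exact ⟨0, by simp [hz ha]⟩
    · exact ⟨z, by simp⟩
    · exact ⟨0, by simpa using (tendsto_exp_log_mul_nhdsGT_zero ha).smul_const z⟩

/-- `t ^ S * g * t ^ (-S)`, where `t ^ S = exp ((log t) • S)`. -/
noncomputable def Matrix.powConj {m : Type*} [Fintype m] [DecidableEq m] (S : Matrix m m ℂ)
    (t : ℝ) (g : Matrix m m ℂ) : Matrix m m ℂ :=
  NormedSpace.exp ((Real.log t : ℂ) • S) * g * NormedSpace.exp ((-(Real.log t : ℂ)) • S)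

namespace Matrix

variable {m : Type*} [Fintype m] [DecidableEq m]

theorem powConj_units_conj (u : (Matrix m m ℂ)ˣ) (D : Matrix m m ℂ) (t : ℝ) (g : Matrix m m ℂ) :
    powConj (u.val * D * u⁻¹.val) t g = u.val * powConj D t (u⁻¹.val * g * u.val) * u⁻¹.val := by
  have hconj (c : ℂ) : c • (u.val * D * u⁻¹.val) = u.val * (c • D) * u⁻¹.val := by
    rw [Matrix.mul_smul, Matrix.smul_mul]
  rw [powConj, powConj, hconj, hconj, exp_units_conj, exp_units_conj]
  simp only [mul_assoc]

theorem powConj_diagonal_ofReal_apply (φ : m → ℝ) (t : ℝ) (A : Matrix m m ℂ) (i j : m) :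
    powConj (diagonal fun i => (φ i : ℂ)) t A i j =
      Real.exp (Real.log t * (φ i - φ j)) • A i j := by
  rw [powConj, exp_smul_diagonal, exp_smul_diagonal, mul_diagonal, diagonal_mul, mul_right_comm,
    ← NormedSpace.exp_add, Complex.real_smul, Complex.ofReal_exp, ← Complex.exp_eq_exp_ℂ]
  push_cast
  ring_nf

theorem exists_tendsto_powConj_diagonal_iff (φ : m → ℝ) (A : Matrix m m ℂ) :
    (∃ L, Tendsto (fun t => powConj (diagonal fun i => (φ i : ℂ)) t A) (𝓝[>] 0) (𝓝 L)) ↔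
      ∀ i j, φ i < φ j → A i j = 0 := by
  simp only [exists_tendsto_iff, powConj_diagonal_ofReal_apply,
    Real.exists_tendsto_exp_log_mul_smul_iff, sub_neg]

end Matrix

/-- For `S = h ⬝ diag(φ) ⬝ h⁻¹`, the set of `g ∈ GL_n(ℂ)` such that
`t ↦ exp((log t)·S) ⬝ g ⬝ exp(−(log t)·S)` converges as `t → 0⁺` is exactly `h P_φ h⁻¹`. -/
theorem conjugated_parabolic_as_limit_set (n : ℕ) (φ : Fin n → ℝ)
    (h : (Matrix (Fin n) (Fin n) ℂ)ˣ)
    (S : Matrix (Fin n) (Fin n) ℂ)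
    (hS : S = h.val * Matrix.diagonal (fun i => (φ i : ℂ)) * (↑h⁻¹ : Matrix (Fin n) (Fin n) ℂ)) :
    {g : (Matrix (Fin n) (Fin n) ℂ)ˣ | ∃ L : Matrix (Fin n) (Fin n) ℂ,
        Tendsto (fun t : ℝ =>
            NormedSpace.exp ((Real.log t : ℂ) • S) * g.val *
              NormedSpace.exp ((-(Real.log t : ℂ)) • S))
          (nhdsWithin 0 (Set.Ioi 0)) (nhds L)} =
    {g : (Matrix (Fin n) (Fin n) ℂ)ˣ | ∃ p ∈ parabolicSet n φ, g = h * p * h⁻¹} := by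
  ext g
  change (∃ L, Tendsto (fun t => powConj S t g) _ _) ↔ _
  rw [hS]
  simp only [powConj_units_conj, h.exists_tendsto_conj_iff, exists_tendsto_powConj_diagonal_iff]
  constructor
  · intro hg
    exact ⟨h⁻¹ * g * h, hg, by group⟩
  · rintro ⟨p, hp, rfl⟩
    simpa [mul_assoc, parabolicSet] using hp
end

section
/- Let n : ℕ, φ : Fin n → ℝ, and g ∈ GL_n(ℂ). Then the function t ↦ D(t) ⬝ g ⬝ D(t)⁻¹ (for t ∈ (0,∞), where D(t) is the diagonal matrix with entries t^(φ i)) converges to the identity matrix as t → 0⁺ if and only if: g i j = 0 for all i, j with φ i < φ j, and g i j = (1 if i = j, else 0) for all i, j with φ i = φ j. -/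
open Filter Topology

/-! Convergence is entrywise. Where `φ i > φ j` the factor `t ^ (φ i - φ j)` tends to `0`, so
these entries impose nothing; where `φ i = φ j` the entry is constant, so it must already be
`δ_{ij}`; where `φ i < φ j` the factor blows up, so the entry must vanish (multiply back by
`t ^ (φ j - φ i) → 0`). -/

lemma Matrix.tendsto_nhds_iff {α m n R : Type*} [TopologicalSpace R] {f : α → Matrix m n R}
    {l : Filter α} {A : Matrix m n R} :
    Tendsto f l (𝓝 A) ↔ ∀ i j, Tendsto (fun x => f x i j) l (𝓝 (A i j)) :=
  tendsto_pi_nhds.trans <| forall_congr' fun _ => tendsto_pi_nhds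

section RpowScaling

variable {𝕜 : Type*} [RCLike 𝕜]

lemma tendsto_ofReal_rpow_mul_nhdsWithin_zero {c : ℝ} (hc : 0 < c) (a : 𝕜) :
    Tendsto (fun t : ℝ => ((t ^ c : ℝ) : 𝕜) * a) (𝓝[>] 0) (𝓝 0) := by
  have hpow : Tendsto (fun t : ℝ => t ^ c) (𝓝[>] 0) (𝓝 0) := by
    simpa [Real.zero_rpow hc.ne'] using
      (Real.continuousAt_rpow_const 0 c (Or.inr hc.le)).tendsto.mono_left nhdsWithin_le_nhds
  simpa using ((RCLike.continuous_ofReal (K := 𝕜)).tendsto 0 |>.comp hpow).mul_const a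

lemma eq_zero_of_tendsto_ofReal_rpow_mul {c : ℝ} (hc : c < 0) {a b : 𝕜}
    (h : Tendsto (fun t : ℝ => ((t ^ c : ℝ) : 𝕜) * a) (𝓝[>] 0) (𝓝 b)) : a = 0 := by
  have hprod := (tendsto_ofReal_rpow_mul_nhdsWithin_zero (neg_pos.2 hc) (1 : 𝕜)).mul h
  rw [zero_mul] at hprod
  have hconst : (fun t : ℝ => ((t ^ (-c) : ℝ) : 𝕜) * 1 * (((t ^ c : ℝ) : 𝕜) * a))
      =ᶠ[𝓝[>] 0] fun _ => a := by
    filter_upwards [self_mem_nhdsWithin] with t (ht : 0 < t)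
    rw [mul_one, ← mul_assoc, ← RCLike.ofReal_mul, ← Real.rpow_add ht, neg_add_cancel,
      Real.rpow_zero, RCLike.ofReal_one, one_mul]
  exact tendsto_nhds_unique tendsto_const_nhds (hprod.congr' hconst)

end RpowScaling

/-- For `g ∈ GL_n(ℂ)`, the function `t ↦ D(t) ⬝ g ⬝ D(t)⁻¹` on `(0,∞)`,
with `(i,j)` entry `t ^ (φ i - φ j) * g i j`, tends to the identity matrix as `t → 0⁺` if and
only if `g i j = 0` whenever `φ i < φ j` and `g i j = δ_{ij}` whenever `φ i = φ j`. -/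
theorem limit_one_iff_unipotent_radical (n : ℕ) (φ : Fin n → ℝ)
    (g : (Matrix (Fin n) (Fin n) ℂ)ˣ) :
    Tendsto (fun t : ℝ => Matrix.of fun i j => ((t ^ (φ i - φ j) : ℝ) : ℂ) * g.val i j)
        (nhdsWithin 0 (Set.Ioi 0)) (nhds (1 : Matrix (Fin n) (Fin n) ℂ)) ↔
    ((∀ i j, φ i < φ j → g.val i j = 0) ∧
      ∀ i j, φ i = φ j → g.val i j = if i = j then 1 else 0) := by
  simp only [Matrix.tendsto_nhds_iff, Matrix.of_apply, Matrix.one_apply]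
  constructor
  · intro h
    refine ⟨fun i j hlt => eq_zero_of_tendsto_ofReal_rpow_mul (sub_neg.2 hlt) (h i j),
      fun i j heq => by simpa [heq] using h i j⟩
  · rintro ⟨h_above, h_block⟩ i j
    have hne (hφ : φ i ≠ φ j) : i ≠ j := fun hij => hφ (congrArg φ hij)
    rcases lt_trichotomy (φ i) (φ j) with hlt | heq | hgt
    · simp [h_above i j hlt, hne hlt.ne]
    · simp [heq, ← h_block i j heq]
    · rw [if_neg (hne hgt.ne')]
      exact tendsto_ofReal_rpow_mul_nhdsWithin_zero (sub_pos.2 hgt) _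
end

section
/- Let n : ℕ, τ : Fin n → ℝ, Θ = diag(τ), and suppose X ∈ Mat_n(ℂ) commutes with exp(2πi·Θ). Then there is a unique finitely supported family of matrices (A m)_{m ∈ ℤ} such that X = Σ_{m ∈ ℤ} A m and Θ ⬝ A m − A m ⬝ Θ = m · A m for every m ∈ ℤ; explicitly, A m is the matrix with (i,j) entry equal to X i j if τ i − τ j = m and 0 otherwise. -/
open Real

/-!
Conjugating by `exp (2πi·diag τ)` multiplies the `(i, j)` entry of a matrix by
`exp (2πi (τ i - τ j))`, so a matrix commuting with it is supported on the entries where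
`τ i - τ j` is an integer. On the other hand `[diag τ, A] = m • A` says exactly that `A` is
supported on the entries where `τ i - τ j = m`. Hence the components are forced to be the
restrictions of `X` to the level sets `τ i - τ j = m`, and these add up to `X`.
-/

open Matrix

namespace Matrix

variable {ι : Type*} [Fintype ι] [DecidableEq ι]

theorem finsum_apply_apply {α m n R : Type*} [AddCommMonoid R] {A : α → Matrix m n R}
    (hA : (Function.support A).Finite) (i : m) (j : n) :
    (∑ᶠ a, A a) i j = ∑ᶠ a, A a i j :=
  (entryAddMonoidHom R i j).map_finsum hA

theorem diagonal_mul_sub_mul_diagonal_apply {R : Type*} [CommRing R] (d : ι → R)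
    (A : Matrix ι ι R) (i j : ι) :
    (diagonal d * A - A * diagonal d) i j = (d i - d j) * A i j := by
  rw [sub_apply, diagonal_mul, mul_diagonal]
  ring

theorem diagonal_mul_sub_mul_diagonal_eq_smul_iff {R : Type*} [CommRing R] [NoZeroDivisors R]
    (d : ι → R) (A : Matrix ι ι R) (c : R) :
    diagonal d * A - A * diagonal d = c • A ↔ ∀ i j, d i - d j ≠ c → A i j = 0 := by
  simp only [← Matrix.ext_iff, diagonal_mul_sub_mul_diagonal_apply, smul_apply, smul_eq_mul]
  refine forall₂_congr fun i j => ?_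
  rw [← sub_eq_zero, ← sub_mul, mul_eq_zero, sub_eq_zero, or_iff_not_imp_left]

theorem mul_diagonal_eq_diagonal_mul_iff {R : Type*} [CommRing R] [NoZeroDivisors R]
    (d : ι → R) (A : Matrix ι ι R) :
    A * diagonal d = diagonal d * A ↔ ∀ i j, d i ≠ d j → A i j = 0 := by
  rw [eq_comm, ← sub_eq_zero, ← zero_smul R A, diagonal_mul_sub_mul_diagonal_eq_smul_iff]
  simp only [ne_eq, sub_eq_zero]

theorem exp_smul_diagonal_s8 (z : ℂ) (d : ι → ℂ) :
    NormedSpace.exp (z • diagonal d) = diagonal fun k => Complex.exp (z * d k) := by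
  rw [← diagonal_smul, exp_diagonal, Pi.exp_def, Complex.exp_eq_exp_ℂ]
  rfl

end Matrix

theorem Complex.exists_int_sub_eq_of_exp_two_pi_mul_I_eq {a b : ℝ}
    (h : Complex.exp (2 * π * I * a) = Complex.exp (2 * π * I * b)) :
    ∃ m : ℤ, a - b = m := by
  obtain ⟨m, hm⟩ := Complex.exp_eq_exp_iff_exists_int.mp h
  refine ⟨m, ?_⟩
  have h2πI : 2 * π * I ≠ 0 := by simp [Real.pi_ne_zero, I_ne_zero]
  have : (a : ℂ) - b = m := mul_left_cancel₀ h2πI (by linear_combination hm)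
  exact_mod_cast this

section IntComponent

variable {ι : Type*}

theorem exists_int_sub_eq_of_commute_exp_diagonal [Fintype ι] [DecidableEq ι] (τ : ι → ℝ)
    {X : Matrix ι ι ℂ}
    (hX : X * NormedSpace.exp ((2 * π * Complex.I) • diagonal fun k => (τ k : ℂ)) =
      NormedSpace.exp ((2 * π * Complex.I) • diagonal fun k => (τ k : ℂ)) * X)
    {i j : ι} (hij : X i j ≠ 0) : ∃ m : ℤ, τ i - τ j = m := by
  rw [exp_smul_diagonal_s8, mul_diagonal_eq_diagonal_mul_iff] at hX
  exact Complex.exists_int_sub_eq_of_exp_two_pi_mul_I_eq (not_imp_comm.mp (hX i j) hij)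

theorem diagonal_ofReal_commutator_eq_intCast_smul_iff [Fintype ι] [DecidableEq ι] (τ : ι → ℝ)
    (A : Matrix ι ι ℂ) (m : ℤ) :
    (diagonal fun k => (τ k : ℂ)) * A - A * diagonal (fun k => (τ k : ℂ)) = (m : ℂ) • A ↔
      ∀ i j, τ i - τ j ≠ m → A i j = 0 := by
  rw [diagonal_mul_sub_mul_diagonal_eq_smul_iff]
  exact forall₂_congr fun i j => imp_congr_left (not_congr (by norm_cast))

/-- The component `A m` of `X` in the `m`-eigenspace of `ad (diagonal τ)`. -/
noncomputable def intComponent {R : Type*} [Zero R] (τ : ι → ℝ) (X : Matrix ι ι R) (m : ℤ) :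
    Matrix ι ι R :=
  of fun i j => if τ i - τ j = m then X i j else 0

variable {R : Type*} (τ : ι → ℝ)

theorem intComponent_apply_of_ne [Zero R] (X : Matrix ι ι R) {m : ℤ} {i j : ι}
    (h : τ i - τ j ≠ m) : intComponent τ X m i j = 0 :=
  if_neg h

theorem intComponent_apply_of_eq [Zero R] (X : Matrix ι ι R) {m : ℤ} {i j : ι}
    (h : τ i - τ j = m) : intComponent τ X m i j = X i j :=
  if_pos h

theorem finite_support_intComponent [Finite ι] [Zero R] (X : Matrix ι ι R) :
    (Function.support (intComponent τ X)).Finite := by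
  refine (Set.finite_range fun p : ι × ι => ⌊τ p.1 - τ p.2⌋).subset fun m hm => ?_
  obtain ⟨i, j, hij⟩ : ∃ i j, intComponent τ X m i j ≠ 0 := by
    by_contra! h
    exact hm (Matrix.ext h)
  have hm : τ i - τ j = m := by_contra fun h => hij (intComponent_apply_of_ne τ X h)
  exact ⟨(i, j), by simp [hm]⟩

theorem finsum_intComponent_apply [Finite ι] [AddCommMonoid R] (X : Matrix ι ι R) {m : ℤ}
    {i j : ι} (h : τ i - τ j = m) : (∑ᶠ k, intComponent τ X k) i j = X i j := by
  rw [finsum_apply_apply (finite_support_intComponent τ X),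
    finsum_eq_single _ m fun k hk =>
      intComponent_apply_of_ne τ X (by rw [h]; exact_mod_cast hk.symm),
    intComponent_apply_of_eq τ X h]

theorem finsum_intComponent [Finite ι] [AddCommMonoid R] {X : Matrix ι ι R}
    (hX : ∀ i j, X i j ≠ 0 → ∃ m : ℤ, τ i - τ j = m) :
    ∑ᶠ m, intComponent τ X m = X := by
  ext i j
  by_cases hij : ∃ m : ℤ, τ i - τ j = m
  · obtain ⟨m, hm⟩ := hij
    exact finsum_intComponent_apply τ X hm
  · rw [finsum_apply_apply (finite_support_intComponent τ X), not_imp_comm.mp (hX i j) hij]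
    exact finsum_eq_zero_of_forall_eq_zero fun m =>
      intComponent_apply_of_ne τ X fun h => hij ⟨m, h⟩

theorem eq_intComponent_finsum [Finite ι] [AddCommMonoid R] {A : ℤ → Matrix ι ι R}
    (hA : (Function.support A).Finite) (hAτ : ∀ (m : ℤ) i j, τ i - τ j ≠ m → A m i j = 0) :
    A = intComponent τ (∑ᶠ m, A m) := by
  funext m
  ext i j
  by_cases h : τ i - τ j = m
  · rw [intComponent_apply_of_eq τ _ h, finsum_apply_apply hA,
      finsum_eq_single _ m fun k hk => hAτ k i j (by rw [h]; exact_mod_cast hk.symm)]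
  · rw [intComponent_apply_of_ne τ _ h, hAτ m i j h]

end IntComponent

/-- If `X` commutes with `exp(2πi·Θ)`, where `Θ = diag(τ)` with `τ` real,
then `X` decomposes uniquely as a finitely supported sum `X = Σ_{m ∈ ℤ} A m` with
`[Θ, A m] = m · A m`; explicitly `(A m) i j = X i j` if `τ i − τ j = m` and `0` otherwise. -/
theorem integer_eigenspace_decomposition (n : ℕ) (τ : Fin n → ℝ)
    (Θ : Matrix (Fin n) (Fin n) ℂ)
    (hΘ : Θ = Matrix.diagonal fun k => (τ k : ℂ))
    (X : Matrix (Fin n) (Fin n) ℂ)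
    (hX : X * NormedSpace.exp ((2 * π * Complex.I) • Θ) =
      NormedSpace.exp ((2 * π * Complex.I) • Θ) * X)
    (B : ℤ → Matrix (Fin n) (Fin n) ℂ)
    (hB : B = fun m : ℤ => Matrix.of fun i j => if τ i - τ j = (m : ℝ) then X i j else 0) :
    (Set.Finite {m : ℤ | B m ≠ 0}) ∧
    X = ∑ᶠ m : ℤ, B m ∧
    (∀ m : ℤ, Θ * B m - B m * Θ = (m : ℂ) • B m) ∧
    (∀ A : ℤ → Matrix (Fin n) (Fin n) ℂ, Set.Finite {m : ℤ | A m ≠ 0} →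
      X = ∑ᶠ m : ℤ, A m → (∀ m : ℤ, Θ * A m - A m * Θ = (m : ℂ) • A m) → A = B) := by
  replace hB : B = intComponent τ X := hB
  subst hΘ hB
  refine ⟨finite_support_intComponent τ X,
    (finsum_intComponent τ fun _ _ => exists_int_sub_eq_of_commute_exp_diagonal τ hX).symm,
    fun m => (diagonal_ofReal_commutator_eq_intCast_smul_iff τ _ m).2
      fun _ _ => intComponent_apply_of_ne τ X,
    fun A hA hXA hAτ => ?_⟩
  rw [hXA]
  exact eq_intComponent_finsum τ hA fun m =>
    (diagonal_ofReal_commutator_eq_intCast_smul_iff τ _ m).1 (hAτ m)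
end

section
/- Let n : ℕ, τ : Fin n → ℝ, Θ = diag(τ), and let σ ∈ Mat_n(ℂ) with Θ ⬝ σ = σ ⬝ Θ. Let (A m)_{m ∈ ℤ} be a finitely supported family of matrices with Θ ⬝ A m − A m ⬝ Θ = m · A m and σ ⬝ A m = A m ⬝ σ for all m, and set R = σ + Σ_{m ∈ ℤ} A m. For t ∈ (0,∞) define Φ(t) = exp((log t)·Θ) ⬝ exp((log t)·R). Then Φ is differentiable on (0,∞) and for every t > 0 one has t · Φ′(t) = (Θ + σ + Σ_{m ∈ ℤ} t^m · A m) ⬝ Φ(t). -/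
/-! From `[Θ, B] = m • B` one gets `Θ * B = B * (Θ + m)`, hence
`exp (s • Θ) * B = e^{s m} • B * exp (s • Θ)`; at `s = log t` this conjugates
`R = σ + ∑ A m` into `σ + ∑ t ^ m • A m`. The product rule for
`Φ t = exp (log t • Θ) * exp (log t • R)` gives
`t • Φ' t = Θ * Φ t + exp (log t • Θ) * R * exp (log t • R)`, and the conjugation turns the
second term into `(σ + ∑ t ^ m • A m) * Φ t`. -/

open Real NormedSpace

theorem exp_smul_mul_of_commutator_eq_smul {𝕂 𝔸 : Type*} [RCLike 𝕂] [NormedRing 𝔸]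
    [NormedAlgebra 𝕂 𝔸] [CompleteSpace 𝔸] {Θ B : 𝔸} {c : 𝕂} (h : Θ * B - B * Θ = c • B) (s : 𝕂) :
    exp (s • Θ) * B = exp (s * c) • (B * exp (s • Θ)) := by
  let +nondep : NormedAlgebra ℚ 𝔸 := .restrictScalars ℚ 𝕂 𝔸
  have hsemiconj : SemiconjBy B (s • Θ + algebraMap 𝕂 𝔸 (s * c)) (s • Θ) := by
    rw [SemiconjBy, mul_add, mul_smul_comm, ← Algebra.commutes, ← Algebra.smul_def, mul_smul,
      ← h, smul_mul_assoc, smul_sub]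
    abel
  rw [← hsemiconj.exp_right, exp_add_of_commute (Algebra.commutes _ _).symm,
    ← algebraMap_exp_comm, ← mul_assoc, ← Algebra.commutes, ← Algebra.smul_def]

section ComplexBanachAlgebra

variable {𝔸 : Type*} [NormedRing 𝔸] [NormedAlgebra ℂ 𝔸] [CompleteSpace 𝔸]

theorem exp_log_smul_mul_of_commutator_eq_zsmul {Θ B : 𝔸} {m : ℤ}
    (h : Θ * B - B * Θ = (m : ℂ) • B) {t : ℝ} (ht : 0 < t) :
    exp ((log t : ℂ) • Θ) * B = ((t ^ m : ℝ) : ℂ) • (B * exp ((log t : ℂ) • Θ)) := by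
  rw [exp_smul_mul_of_commutator_eq_smul h, ← Complex.exp_eq_exp_ℂ, Complex.ofReal_log ht.le,
    ← Complex.cpow_def_of_ne_zero (Complex.ofReal_ne_zero.mpr ht.ne'), Complex.cpow_intCast,
    Complex.ofReal_zpow]

theorem exp_log_smul_mul_finsum {Θ : 𝔸} {A : ℤ → 𝔸}
    (hA : ∀ m : ℤ, Θ * A m - A m * Θ = (m : ℂ) • A m) {t : ℝ} (ht : 0 < t) :
    exp ((log t : ℂ) • Θ) * ∑ᶠ m, A m =
      (∑ᶠ m : ℤ, ((t ^ m : ℝ) : ℂ) • A m) * exp ((log t : ℂ) • Θ) := by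
  let +nondep : NormedAlgebra ℚ 𝔸 := .restrictScalars ℚ ℂ 𝔸
  set E := exp ((log t : ℂ) • Θ)
  have hE : IsUnit E := isUnit_exp _
  -- multiplication by a unit is injective, so it commutes with `finsum` even for infinite support
  calc E * ∑ᶠ m, A m = ∑ᶠ m, E * A m :=
        (AddMonoidHom.mulLeft E).map_finsum_of_injective hE.mul_right_injective A
    _ = ∑ᶠ m : ℤ, (((t ^ m : ℝ) : ℂ) • A m) * E :=
        finsum_congr fun m => by rw [exp_log_smul_mul_of_commutator_eq_zsmul (hA m) ht,
          smul_mul_assoc]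
    _ = (∑ᶠ m : ℤ, ((t ^ m : ℝ) : ℂ) • A m) * E :=
        ((AddMonoidHom.mulRight E).map_finsum_of_injective hE.mul_left_injective _).symm

theorem hasDerivAt_exp_log_smul (M : 𝔸) {t : ℝ} (ht : 0 < t) :
    HasDerivAt (fun s : ℝ => exp ((log s : ℂ) • M))
      ((t : ℂ)⁻¹ • (M * exp ((log t : ℂ) • M))) t := by
  have hlog : HasDerivAt (fun s : ℝ => (log s : ℂ)) ((t⁻¹ : ℝ) : ℂ) t :=
    (hasDerivAt_log ht.ne').ofReal_comp
  rw [← Complex.ofReal_inv]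
  exact (hasDerivAt_exp_smul_const' M (log t : ℂ)).scomp t hlog

theorem hasDerivAt_exp_log_smul_mul_exp_log_smul {Θ R N : 𝔸} {t : ℝ} (ht : 0 < t)
    (hN : exp ((log t : ℂ) • Θ) * R = N * exp ((log t : ℂ) • Θ)) :
    HasDerivAt (fun s : ℝ => exp ((log s : ℂ) • Θ) * exp ((log s : ℂ) • R))
      ((t : ℂ)⁻¹ • ((Θ + N) * (exp ((log t : ℂ) • Θ) * exp ((log t : ℂ) • R)))) t := by
  convert (hasDerivAt_exp_log_smul Θ ht).fun_mul (hasDerivAt_exp_log_smul R ht) using 1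
  rw [smul_mul_assoc, mul_smul_comm, ← smul_add, ← mul_assoc _ R, hN]
  noncomm_ring

end ComplexBanachAlgebra

attribute [local instance] Matrix.linftyOpNormedAddCommGroup Matrix.linftyOpNormedSpace
  Matrix.linftyOpNormedRing Matrix.linftyOpNormedAlgebra

theorem HasDerivAt.matrix_apply {𝕜 α m n : Type*} [NontriviallyNormedField 𝕜] [CompleteSpace 𝕜]
    [NormedAddCommGroup α] [NormedSpace 𝕜 α] [FiniteDimensional 𝕜 α] [Fintype m] [Fintype n]
    {f : 𝕜 → Matrix m n α} {f' : Matrix m n α} {t : 𝕜} (h : HasDerivAt f f' t) (i : m) (j : n) :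
    HasDerivAt (fun s => f s i j) (f' i j) t :=
  (Matrix.entryLinearMap 𝕜 α i j).toContinuousLinearMap.hasFDerivAt.comp_hasDerivAt t h

theorem fundamental_solution_normal_form_general (n : ℕ)
    (Θ : Matrix (Fin n) (Fin n) ℂ)
    (σ : Matrix (Fin n) (Fin n) ℂ) (hσ : Θ * σ = σ * Θ)
    (A : ℤ → Matrix (Fin n) (Fin n) ℂ)
    (hA : ∀ m : ℤ, Θ * A m - A m * Θ = (m : ℂ) • A m)
    (R : Matrix (Fin n) (Fin n) ℂ) (hR : R = σ + ∑ᶠ m : ℤ, A m)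
    (Φ : ℝ → Matrix (Fin n) (Fin n) ℂ)
    (hΦ : Φ = fun t => NormedSpace.exp ((Real.log t : ℂ) • Θ) *
      NormedSpace.exp ((Real.log t : ℂ) • R)) :
    ∃ Φ' : ℝ → Matrix (Fin n) (Fin n) ℂ,
      (∀ t ∈ Set.Ioi (0 : ℝ), ∀ i j, HasDerivAt (fun s => Φ s i j) (Φ' t i j) t) ∧
      (∀ t ∈ Set.Ioi (0 : ℝ),
        (t : ℂ) • Φ' t = (Θ + σ + ∑ᶠ m : ℤ, ((t ^ (m : ℤ) : ℝ) : ℂ) • A m) * Φ t) := by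
  refine ⟨fun t => (t : ℂ)⁻¹ • ((Θ + σ + ∑ᶠ m : ℤ, ((t ^ m : ℝ) : ℂ) • A m) * Φ t),
    fun t ht i j => ?_, fun t ht => ?_⟩
  · have hconj : exp ((log t : ℂ) • Θ) * R =
        (σ + ∑ᶠ m : ℤ, ((t ^ m : ℝ) : ℂ) • A m) * exp ((log t : ℂ) • Θ) := by
      rw [hR, mul_add, add_mul, ((Commute.smul_left hσ _).exp_left).eq]
      exact congrArg (σ * _ + ·) (exp_log_smul_mul_finsum hA ht)
    have hΦ' := hasDerivAt_exp_log_smul_mul_exp_log_smul ht hconj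
    rw [← add_assoc] at hΦ'
    subst hΦ
    exact hΦ'.matrix_apply i j
  · rw [smul_smul, mul_inv_cancel₀ (Complex.ofReal_ne_zero.mpr (Set.mem_Ioi.mp ht).ne'), one_smul]

/-- Let `Θ = diag(τ)` (real `τ`), `σ` commute with `Θ`, and `(A m)_{m ∈ ℤ}`
be a finitely supported family with `[Θ, A m] = m · A m` and `[σ, A m] = 0`; set
`R = σ + Σ A m`. Then `Φ(t) = exp((log t)·Θ) ⬝ exp((log t)·R)` is differentiable on `(0,∞)`
and satisfies `t · Φ′(t) = (Θ + σ + Σ t^m · A m) ⬝ Φ(t)`, i.e. it is a fundamental solution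
of the connection in normal form. -/
theorem fundamental_solution_normal_form (n : ℕ) (τ : Fin n → ℝ)
    (Θ : Matrix (Fin n) (Fin n) ℂ) (hΘ : Θ = Matrix.diagonal fun k => (τ k : ℂ))
    (σ : Matrix (Fin n) (Fin n) ℂ) (hσ : Θ * σ = σ * Θ)
    (A : ℤ → Matrix (Fin n) (Fin n) ℂ)
    (hAfin : Set.Finite {m : ℤ | A m ≠ 0})
    (hA : ∀ m : ℤ, Θ * A m - A m * Θ = (m : ℂ) • A m)
    (hAσ : ∀ m : ℤ, σ * A m = A m * σ)
    (R : Matrix (Fin n) (Fin n) ℂ) (hR : R = σ + ∑ᶠ m : ℤ, A m)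
    (Φ : ℝ → Matrix (Fin n) (Fin n) ℂ)
    (hΦ : Φ = fun t => NormedSpace.exp ((Real.log t : ℂ) • Θ) *
      NormedSpace.exp ((Real.log t : ℂ) • R)) :
    ∃ Φ' : ℝ → Matrix (Fin n) (Fin n) ℂ,
      (∀ t ∈ Set.Ioi (0 : ℝ), ∀ i j, HasDerivAt (fun s => Φ s i j) (Φ' t i j) t) ∧
      (∀ t ∈ Set.Ioi (0 : ℝ),
        (t : ℂ) • Φ' t = (Θ + σ + ∑ᶠ m : ℤ, ((t ^ (m : ℤ) : ℝ) : ℂ) • A m) * Φ t) :=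
  fundamental_solution_normal_form_general n Θ σ hσ A hA R hR Φ hΦ
end

section
/- Let n : ℕ, let s : Fin n → ℝ, and set S = i·diag(s) (a purely imaginary diagonal matrix, so that exp(2πi·S) is a diagonal matrix with positive real entries). Let g ∈ GL_n(ℂ) whose multiplicative Jordan decomposition g = g_s ⬝ g_u has semisimple part g_s = exp(2πi·S). Then there exists a unique matrix R ∈ Mat_n(ℂ) such that R − S is nilpotent, (R − S) ⬝ S = S ⬝ (R − S), and exp(2πi·R) = g; namely R = S + N where exp(2πi·N) = g_u with N nilpotent. -/
/-!
Since `exp(2πi·S)` is diagonal with entries `exp(-2π s_k)`, which coincide exactly when the `s_k`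
do, everything commuting with `exp(2πi·S)` commutes with `S`. For `R - S` commuting with `S`,
`exp(2πi·R) = exp(2πi·S) · exp(2πi·(R - S))`, so `exp(2πi·R) = g` amounts to
`exp(2πi·(R - S)) = u`. Finally `u = exp M` for a nilpotent `M` that is a polynomial in `u - 1`,
and the exponential is injective on nilpotent elements: a nilpotent logarithm of `u` commutes with
`u`, hence with `M`, and for nilpotent `N`, `exp N = 1` gives `N (1 + N w) = 0` with `1 + N w`
a unit.
-/

open Real

namespace IsNilpotent

section Ring

variable {A : Type*} [Ring A] [Algebra ℚ A] {a b : A}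

theorem commute_exp_of_commute (h : Commute a b) : Commute a (exp b) :=
  Commute.sum_right _ _ _ fun i _ => (h.pow_right i).smul_right _

theorem exists_exp_eq_one_add_add_sq_mul (ha : IsNilpotent a) :
    ∃ w, Commute a w ∧ exp a = 1 + a + a ^ 2 * w := by
  obtain ⟨k, hk⟩ := ha
  refine ⟨∑ i ∈ Finset.range k, ((i + 2).factorial : ℚ)⁻¹ • a ^ i,
    Commute.sum_right _ _ _ fun i _ => ((Commute.refl a).pow_right i).smul_right _, ?_⟩
  rw [exp_eq_sum (pow_eq_zero_of_le (by omega : k ≤ k + 2) hk), Finset.sum_range_succ',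
    Finset.sum_range_succ', Finset.mul_sum]
  have hterm (i : ℕ) : ((i + 1 + 1).factorial : ℚ)⁻¹ • a ^ (i + 1 + 1) =
      a ^ 2 * (((i + 2).factorial : ℚ)⁻¹ • a ^ i) := by
    rw [mul_smul_comm, ← pow_add, add_comm 2 i]
  simp only [hterm, zero_add, Nat.factorial_one, Nat.factorial_zero, Nat.cast_one, inv_one,
    one_smul, pow_zero, pow_one]
  abel

theorem eq_zero_of_exp_eq_one (ha : IsNilpotent a) (h : exp a = 1) : a = 0 := by
  obtain ⟨w, hw, hexp⟩ := ha.exists_exp_eq_one_add_add_sq_mul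
  have hunit : IsUnit (1 + a * w) := (hw.isNilpotent_mul_right ha).isUnit_one_add
  refine hunit.mul_left_eq_zero.mp ?_
  rw [h] at hexp
  calc a * (1 + a * w) = 1 + a + a ^ 2 * w - 1 := by noncomm_ring
    _ = 0 := by rw [← hexp, sub_self]

theorem eq_of_exp_eq (hab : Commute a b) (ha : IsNilpotent a) (hb : IsNilpotent b)
    (h : exp a = exp b) : a = b := by
  refine sub_eq_zero.mp (eq_zero_of_exp_eq_one (hab.isNilpotent_sub ha hb) ?_)
  rw [sub_eq_add_neg, exp_add_of_commute hab.neg_right ha hb.neg, h, exp_mul_exp_neg_self hb]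

end Ring

theorem exists_exp_mul_eq_one_add {A : Type*} [CommRing A] [Algebra ℚ A] {b : A}
    (hb : IsNilpotent b) : ∃ r, exp (b * r) = 1 + b := by
  suffices h : ∀ k, ∃ r e, exp (b * r) * (1 + b ^ (k + 1) * e) = 1 + b by
    obtain ⟨k, hk⟩ := hb
    obtain ⟨r, e, h⟩ := h k
    exact ⟨r, by simpa [pow_eq_zero_of_le k.le_succ hk] using h⟩
  -- From `1 + b = exp (b r) (1 + c)` with `b ^ (k + 1) ∣ c`, pass to `exp (b r + c)`: the new
  -- error factor `exp (-c) (1 + c) = 1 + c ^ 2 (…)` is divisible by `b ^ (k + 2)`.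
  intro k
  induction k with
  | zero => exact ⟨0, 1, by simp⟩
  | succ k ih =>
    obtain ⟨r, e, h⟩ := ih
    set c := b ^ (k + 1) * e with hc_def
    have hc : IsNilpotent c := (Commute.all _ _).isNilpotent_mul_right (hb.pow_succ k)
    obtain ⟨w, -, hw⟩ := hc.neg.exists_exp_eq_one_add_add_sq_mul
    refine ⟨r + b ^ k * e, b ^ k * e ^ 2 * (w + w * c - 1), ?_⟩
    have hsplit : exp (b * (r + b ^ k * e)) = exp (b * r) * exp c := by
      rw [← exp_add_of_commute (Commute.all _ _) ((Commute.all _ _).isNilpotent_mul_right hb) hc,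
        hc_def]
      ring_nf
    calc exp (b * (r + b ^ k * e)) * (1 + b ^ (k + 1 + 1) * (b ^ k * e ^ 2 * (w + w * c - 1)))
        = exp (b * r) * (exp c * (exp (-c) * (1 + c))) := by
          rw [hsplit, hw]; ring
      _ = 1 + b := by
          rw [← mul_assoc (exp c), exp_mul_exp_neg_self hc, one_mul, h]

theorem exists_mem_adjoin_exp_eq_one_add {A : Type*} [Ring A] [Algebra ℚ A] {b : A} {k : ℕ}
    (hb : b ^ k = 0) : ∃ a ∈ Algebra.adjoin ℚ {b}, a ^ k = 0 ∧ exp a = 1 + b := by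
  set b' : Algebra.adjoin ℚ {b} := ⟨b, Algebra.self_mem_adjoin_singleton ℚ b⟩
  have hb' : b' ^ k = 0 := Subtype.ext (by simpa using hb)
  obtain ⟨r, hr⟩ := exists_exp_mul_eq_one_add ⟨k, hb'⟩
  refine ⟨(b' * r : Algebra.adjoin ℚ {b}), (b' * r).2, ?_, ?_⟩
  · rw [← Subalgebra.coe_pow, mul_pow, hb', zero_mul, Subalgebra.coe_zero]
  · have h := map_exp ((Commute.all b' r).isNilpotent_mul_right ⟨k, hb'⟩)
      (Algebra.adjoin ℚ {b}).val
    rw [hr] at h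
    simpa [b'] using h.symm

theorem exp_injOn {A : Type*} [Ring A] [Algebra ℚ A] : Set.InjOn exp {a : A | IsNilpotent a} := by
  intro a ha b hb hab
  obtain ⟨k, hk⟩ := isNilpotent_exp_sub_one ha
  obtain ⟨M, hM_mem, hMk, hM⟩ := exists_mem_adjoin_exp_eq_one_add hk
  rw [add_sub_cancel] at hM
  have hlog (x : A) (hx : IsNilpotent x) (hxa : exp x = exp a) : x = M := by
    have hxu : Commute x (exp a - 1) :=
      (hxa ▸ commute_exp_of_commute (Commute.refl x)).sub_right (Commute.one_right x)
    exact eq_of_exp_eq (Algebra.commute_of_mem_adjoin_singleton_of_commute hM_mem hxu) hx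
      ⟨k, hMk⟩ (hxa.trans hM.symm)
  exact (hlog a ha rfl).trans (hlog b hb hab.symm).symm

end IsNilpotent

theorem NormedSpace.exp_eq_isNilpotent_exp {𝔸 : Type*} [Ring 𝔸] [Algebra ℚ 𝔸]
    [TopologicalSpace 𝔸] [IsTopologicalRing 𝔸] {a : 𝔸} (ha : IsNilpotent a) :
    NormedSpace.exp a = IsNilpotent.exp a := by
  obtain ⟨k, ha⟩ := ha
  rw [IsNilpotent.exp_eq_sum ha, NormedSpace.exp_eq_tsum_rat]
  exact tsum_eq_sum fun i hi => by
    rw [pow_eq_zero_of_le (by simpa using hi) ha, smul_zero]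

theorem Matrix.commute_diagonal_of_commute_diagonal {ι R : Type*} [DecidableEq ι] [Fintype ι]
    [CommRing R] [NoZeroDivisors R]
    {d e : ι → R} (hde : ∀ i j, d i = d j → e i = e j) {A : Matrix ι ι R}
    (h : Commute (Matrix.diagonal d) A) : Commute (Matrix.diagonal e) A := by
  ext i j
  have hij := congrFun₂ h i j
  simp only [Matrix.diagonal_mul, Matrix.mul_diagonal] at hij ⊢
  by_cases hd : d i = d j
  · rw [hde i j hd, mul_comm]
  · have : A i j = 0 := by
      have : (d i - d j) * A i j = 0 := by linear_combination hij
      exact (mul_eq_zero.mp this).resolve_left (sub_ne_zero.mpr hd)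
    simp [this]

theorem Matrix.exp_eq_exp_mul_exp_sub {ι 𝔸 : Type*} [Fintype ι] [DecidableEq ι]
    [NormedRing 𝔸] [NormedAlgebra ℚ 𝔸] [CompleteSpace 𝔸] {A B : Matrix ι ι 𝔸}
    (h : Commute (A - B) B) :
    NormedSpace.exp A = NormedSpace.exp B * NormedSpace.exp (A - B) := by
  rw [← Matrix.exp_add_of_commute _ _ h.symm, add_sub_cancel]

theorem commute_of_commute_exp_two_pi_I_smul_I_smul_diagonal {ι : Type*} [Fintype ι]
    [DecidableEq ι] (s : ι → ℝ) {u : Matrix ι ι ℂ}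
    (h : Commute (NormedSpace.exp ((2 * π * Complex.I) •
      Complex.I • Matrix.diagonal fun k => (s k : ℂ))) u) :
    Commute (Complex.I • Matrix.diagonal fun k => (s k : ℂ)) u := by
  have hexp (x : ℝ) : NormedSpace.exp (2 * π * Complex.I * (Complex.I * x)) =
      ((Real.exp (-(2 * π * x)) : ℝ) : ℂ) := by
    rw [← Complex.exp_eq_exp_ℂ, Complex.ofReal_exp]
    congr 1
    push_cast
    linear_combination (2 * π * x : ℂ) * Complex.I_mul_I
  rw [← Matrix.diagonal_smul, ← Matrix.diagonal_smul, Matrix.exp_diagonal] at h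
  rw [← Matrix.diagonal_smul]
  refine Matrix.commute_diagonal_of_commute_diagonal (fun i j hij => ?_) h
  simp only [Pi.exp_def, Pi.smul_apply, smul_eq_mul, hexp, Complex.ofReal_inj, Real.exp_eq_exp,
    neg_inj, mul_eq_mul_left_iff] at hij
  simp [hij.resolve_right (by positivity)]

/-- Let `S = i·diag(s)` with `s` real, and let `g ∈ GL_n(ℂ)` have
multiplicative Jordan decomposition `g = exp(2πi·S) ⬝ u` with `u` unipotent commuting with
`exp(2πi·S)`. Then there is a unique `R` with `R − S` nilpotent, `R − S` commuting with `S`,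
and `exp(2πi·R) = g`; moreover this `R` equals `S + N` where `exp(2πi·N) = u`, i.e. any such
`R` satisfies `exp(2πi·(R − S)) = u`. -/
theorem unique_log_with_prescribed_semisimple_part (n : ℕ) (s : Fin n → ℝ)
    (S : Matrix (Fin n) (Fin n) ℂ)
    (hS : S = Complex.I • Matrix.diagonal fun k => (s k : ℂ))
    (g : (Matrix (Fin n) (Fin n) ℂ)ˣ)
    (u : Matrix (Fin n) (Fin n) ℂ) (hu : (u - 1) ^ n = 0)
    (hcomm : NormedSpace.exp ((2 * π * Complex.I) • S) * u =
      u * NormedSpace.exp ((2 * π * Complex.I) • S))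
    (hg : g.val = NormedSpace.exp ((2 * π * Complex.I) • S) * u) :
    (∃! R : Matrix (Fin n) (Fin n) ℂ,
      (R - S) ^ n = 0 ∧ (R - S) * S = S * (R - S) ∧
        NormedSpace.exp ((2 * π * Complex.I) • R) = g.val) ∧
    (∀ R : Matrix (Fin n) (Fin n) ℂ,
      (R - S) ^ n = 0 → (R - S) * S = S * (R - S) →
        NormedSpace.exp ((2 * π * Complex.I) • R) = g.val →
          NormedSpace.exp ((2 * π * Complex.I) • (R - S)) = u) := by
  set c : ℂ := 2 * π * Complex.I
  have hc : c ≠ 0 := by simp [c, Real.pi_ne_zero, Complex.I_ne_zero]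
  have hSu : Commute S u := by
    subst hS
    exact commute_of_commute_exp_two_pi_I_smul_I_smul_diagonal s hcomm
  obtain ⟨M, hM_mem, hMn, hM⟩ := IsNilpotent.exists_mem_adjoin_exp_eq_one_add hu
  rw [add_sub_cancel, ← NormedSpace.exp_eq_isNilpotent_exp ⟨n, hMn⟩] at hM
  have hMS : Commute (c⁻¹ • M) S := (Algebra.commute_of_mem_adjoin_singleton_of_commute hM_mem
    (hSu.sub_right (Commute.one_right S))).symm.smul_left _
  have hfactor (R : Matrix (Fin n) (Fin n) ℂ) (hRS : Commute (R - S) S) :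
      NormedSpace.exp (c • R) = NormedSpace.exp (c • S) * NormedSpace.exp (c • (R - S)) := by
    rw [Matrix.exp_eq_exp_mul_exp_sub (by rw [← smul_sub]; exact (hRS.smul_left c).smul_right c),
      smul_sub]
  have hlog (R : Matrix (Fin n) (Fin n) ℂ) (hRS : (R - S) * S = S * (R - S))
      (hR : NormedSpace.exp (c • R) = g.val) : NormedSpace.exp (c • (R - S)) = u :=
    (Matrix.isUnit_exp _).mul_left_cancel (by rw [← hfactor R hRS, hR, hg])
  refine ⟨⟨S + c⁻¹ • M, ?_, fun R ⟨hRn, hRS, hR⟩ => ?_⟩, fun R _ => hlog R⟩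
  · simp only [add_sub_cancel_left]
    refine ⟨by rw [smul_pow, hMn, smul_zero], hMS, ?_⟩
    rw [hfactor _ (by rwa [add_sub_cancel_left]), add_sub_cancel_left, smul_smul,
      mul_inv_cancel₀ hc, one_smul, hM, hg]
  · have hRn' : IsNilpotent (c • (R - S)) := ⟨n, by rw [smul_pow, hRn, smul_zero]⟩
    have hRM : c • (R - S) = M := IsNilpotent.exp_injOn hRn' ⟨n, hMn⟩ <| by
      rw [← NormedSpace.exp_eq_isNilpotent_exp hRn',
        ← NormedSpace.exp_eq_isNilpotent_exp ⟨n, hMn⟩, hlog R hRS hR, hM]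
    rw [← hRM, smul_smul, inv_mul_cancel₀ hc, one_smul, add_sub_cancel]
end
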